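/- Under event 𝒜, for every sampled vertex v' ∈ V', the set of k closest sampled vertices with respect to k-hop-limited distance in the skeleton graph G' equals the set of k closest sampled vertices with respect to (√n·k)-hop-limited distance in G: S'^{(k)}_{G'}[k](v') = S'^{(√n·k)}_G[k](v'). -/

import Mathlib

open scoped ENNReal

namespace Stmt8

variable {V : Type*}

/-- Endpoint of a walk starting at `u` with subsequent vertices given by the list. -/
def last : V → List V → V
  | u, [] => u
  | _, x :: xs => last x xs

/-- Weight of a walk starting at `u` with subsequent vertices given by the list. -/
noncomputable def cost (w : V → V → ℝ≥0∞) : V → List V → ℝ≥0∞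
  | _, [] => 0
  | u, x :: xs => w u x + cost w x xs

/-- `h`-hop-limited distance from `u` to `v` (non-edges have weight `⊤`). -/
noncomputable def hdist (w : V → V → ℝ≥0∞) (h : ℕ) (u v : V) : ℝ≥0∞ :=
  ⨅ p ∈ {p : List V | p.length ≤ h ∧ last u p = v}, cost w u p

/-- Shortest-path distance from `u` to `v`. -/
noncomputable def dist (w : V → V → ℝ≥0∞) (u v : V) : ℝ≥0∞ :=
  ⨅ h : ℕ, hdist w h u v

/-- `S` is a set of (at most) `k` closest reachable vertices to `v` (excluding `v`),
with ties broken arbitrarily: members of `S` are reachable and distinct from `v`,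
`|S| ≤ k`, every member is at least as close as every reachable non-member, and `S`
has exactly `k` elements unless it already contains all reachable vertices. -/
def IsKClosest [Fintype V] (w : V → V → ℝ≥0∞) (k : ℕ) (v : V) (S : Finset V) : Prop :=
  (∀ u ∈ S, u ≠ v ∧ dist w v u < ⊤) ∧ S.card ≤ k ∧
  (∀ y ∈ S, ∀ z, z ∉ S → z ≠ v → dist w v z < ⊤ → dist w v y ≤ dist w v z) ∧
  (∀ z, z ∉ S → z ≠ v → dist w v z < ⊤ → S.card = k)

/-- Weight function of the union `G ∪ G^(k)` of the graph with the `k`-shortcut hopset: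
hopset edges `(u,v)` (present when `u ∈ S v` or `v ∈ S u`) get weight `d_G(u,v)`. -/
noncomputable def unionW [Fintype V] [DecidableEq V] (w : V → V → ℝ≥0∞) (S : V → Finset V)
    (u v : V) : ℝ≥0∞ :=
  if u ∈ S v ∨ v ∈ S u then min (w u v) (dist w u v) else w u v


/-- `p` is the canonical `i`-hop-limited shortest `u`–`v` path: it has at most `i`
edges, ends at `v`, has minimum weight (equal to the `i`-limited distance), and among
such paths it has the fewest edges and is lexicographically smallest with respect to
the vertex identifiers `ids` (comparing vertex sequences from the tail `u`). -/
def CanonicalPath (w : V → V → ℝ≥0∞) (ids : V → ℕ) (i : ℕ) (u v : V) (p : List V) : Prop :=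
  p.length ≤ i ∧ last u p = v ∧ cost w u p = hdist w i u v ∧
  ∀ q : List V, q.length ≤ i → last u q = v → cost w u q = hdist w i u v →
    p.length ≤ q.length ∧
    (p.length = q.length → ¬ List.Lex (· < ·) ((u :: q).map ids) ((u :: p).map ids))

/-- Weight function of the skeleton graph `G'` on the sampled set `V'`: an edge
between two sampled vertices has weight equal to the `s`-hop-limited distance in `G`
(`⊤`, i.e. no edge, if they are not connected by an `s`-hop-limited path). -/
noncomputable def skelW [DecidableEq V] (w : V → V → ℝ≥0∞) (V' : Finset V) (s : ℕ)
    (u v : V) : ℝ≥0∞ :=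
  if u ∈ V' ∧ v ∈ V' then hdist w s u v else ⊤

/-- Minimum number of hops of an `i`-hop-limited minimum-weight `u`–`v` path. -/
noncomputable def minHops (w : V → V → ℝ≥0∞) (i : ℕ) (u v : V) : ℕ :=
  sInf {ℓ : ℕ | ∃ p : List V, p.length = ℓ ∧ ℓ ≤ i ∧ last u p = v ∧ cost w u p = hdist w i u v}

/-- Strict comparison of vertices by distance, with ties broken by the tie-breaking
key `tie` (lexicographically). -/
def keyLt (d : V → ℝ≥0∞) (tie : V → ℕ × ℕ) (y z : V) : Prop :=
  Prod.Lex (· < ·) (Prod.Lex (· < ·) (· < ·)) (d y, tie y) (d z, tie z)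

/-- `S` is the set of the `k` closest vertices of `dom` to `v` (excluding `v`) with
respect to the distance function `d`, with ties broken by the key `tie`: members are
reachable, `|S| ≤ k`, every member strictly precedes every reachable non-member, and
`S` has exactly `k` elements unless it contains all reachable vertices of `dom`. -/
def IsKNear (d : V → ℝ≥0∞) (tie : V → ℕ × ℕ) (dom : Finset V) (k : ℕ) (v : V)
    (S : Finset V) : Prop :=
  S ⊆ dom ∧ v ∉ S ∧ S.card ≤ k ∧ (∀ y ∈ S, d y < ⊤) ∧
  (∀ y ∈ S, ∀ z ∈ dom, z ∉ S → z ≠ v → d z < ⊤ → keyLt d tie y z) ∧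
  (∀ z ∈ dom, z ≠ v → d z < ⊤ → z ∉ S → S.card = k)

/-!
Write `s = ⌊√n⌋`. A skeleton walk with at most `k` edges expands into a walk in `G` with at
most `s·k` edges, so skeleton distances dominate the `(s·k)`-limited distances of `G`. For the
converse on a member `z` of the `G`-side set, cut the canonical `v'`–`z` path at its sampled
vertices: by event 𝒜 every piece has fewer than `s` edges, hence is a skeleton edge of no larger
weight. Each sampled vertex on the path precedes `z` in the tie-broken order (it is no farther,
and when equally far it is reached with fewer hops), so it lies in the set too and there are at
most `k` pieces. The two distances thus agree on that set and are ordered elsewhere, so it is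
also the `k`-nearest set for the skeleton distance, which is unique.
-/

section Walks

theorem last_append (u : V) (A B : List V) : last u (A ++ B) = last (last u A) B := by
  induction A generalizing u with
  | nil => rfl
  | cons x xs ih => exact ih x

theorem last_eq_getLast (u : V) {p : List V} (hp : p ≠ []) : last u p = p.getLast hp := by
  induction p generalizing u with
  | nil => exact absurd rfl hp
  | cons x xs ih =>
    cases xs with
    | nil => rfl
    | cons y ys => exact ih x (List.cons_ne_nil y ys)

theorem cost_append (w : V → V → ℝ≥0∞) (u : V) (A B : List V) :
    cost w u (A ++ B) = cost w u A + cost w (last u A) B := by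
  induction A generalizing u with
  | nil => simp [cost, last]
  | cons x xs ih => simp [cost, last, ih x, add_assoc]

theorem exists_append_of_mem_dropLast (u : V) {p : List V} {x : V} (hx : x ∈ p.dropLast) :
    ∃ A B, p = A ++ B ∧ A ≠ [] ∧ B ≠ [] ∧ last u A = x := by
  have hp : p ≠ [] := by rintro rfl; simp at hx
  obtain ⟨s, t, hst⟩ := List.mem_iff_append.mp hx
  refine ⟨s ++ [x], t ++ [p.getLast hp], ?_, by simp, by simp, by rw [last_append]; rfl⟩
  have hp' := List.dropLast_append_getLast hp
  rw [hst] at hp'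
  exact hp'.symm.trans (by simp)

theorem mem_dropLast_or_eq_last (u : V) {p : List V} {t : V} (ht : t ∈ p) :
    t ∈ p.dropLast ∨ t = last u p := by
  have hp : p ≠ [] := List.ne_nil_of_mem ht
  rw [← List.dropLast_append_getLast hp, List.mem_append, List.mem_singleton] at ht
  rwa [last_eq_getLast u hp]

theorem nodup_cons_of_forall_last_notMem {u : V} {p : List V}
    (h : ∀ A B, p = A ++ B → last u A ∉ B) : (u :: p).Nodup := by
  induction p generalizing u with
  | nil => exact List.nodup_singleton u
  | cons x p ih =>
    refine List.nodup_cons.mpr ⟨h [] _ rfl, ih fun A B hAB => ?_⟩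
    exact h (x :: A) B (by rw [hAB]; rfl)

end Walks

section HopLimitedDistance

variable {w : V → V → ℝ≥0∞} {h : ℕ} {u v : V} {p : List V}

theorem hdist_le_cost (hlen : p.length ≤ h) (hlast : last u p = v) :
    hdist w h u v ≤ cost w u p :=
  iInf₂_le p ⟨hlen, hlast⟩

theorem hdist_anti {h' : ℕ} (hh : h ≤ h') (u v : V) : hdist w h' u v ≤ hdist w h u v :=
  le_iInf₂ fun _ hp => hdist_le_cost (hp.1.trans hh) hp.2

theorem exists_cost_eq_hdist [Finite V] (hfin : hdist w h u v < ⊤) :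
    ∃ p : List V, p.length ≤ h ∧ last u p = v ∧ cost w u p = hdist w h u v := by
  set S : Set (List V) := {p | p.length ≤ h ∧ last u p = v}
  have hS : S.Finite := (List.finite_length_le V h).subset fun _ hp => hp.1
  have hne : S.Nonempty := by
    by_contra hempty
    refine hfin.ne (eq_top_iff.mpr (le_iInf₂ fun p hp => ?_))
    exact absurd ⟨p, hp⟩ hempty
  obtain ⟨p, hp, hmin⟩ := S.exists_min_image (cost w u) hS hne
  exact ⟨p, hp.1, hp.2, le_antisymm (le_iInf₂ hmin) (hdist_le_cost hp.1 hp.2)⟩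

theorem hdist_add_le [Finite V] (a b : ℕ) (u x v : V) :
    hdist w (a + b) u v ≤ hdist w a u x + hdist w b x v := by
  rcases eq_top_or_lt_top (hdist w a u x) with h₁ | h₁
  · simp [h₁]
  rcases eq_top_or_lt_top (hdist w b x v) with h₂ | h₂
  · simp [h₂]
  obtain ⟨p, hpl, hpe, hpc⟩ := exists_cost_eq_hdist h₁
  obtain ⟨q, hql, hqe, hqc⟩ := exists_cost_eq_hdist h₂
  calc hdist w (a + b) u v ≤ cost w u (p ++ q) :=
        hdist_le_cost (by simpa using Nat.add_le_add hpl hql) (by rw [last_append, hpe, hqe])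
    _ = hdist w a u x + hdist w b x v := by rw [cost_append, hpe, hpc, hqc]

end HopLimitedDistance

section Canonical

variable {w : V → V → ℝ≥0∞} {ids : V → ℕ} {i : ℕ} {u v : V} {p : List V}

theorem lex_append_of_length_eq {α : Type*} {r : α → α → Prop} {l₁ l₂ : List α}
    (h : List.Lex r l₁ l₂) (hlen : l₁.length = l₂.length) (t : List α) :
    List.Lex r (l₁ ++ t) (l₂ ++ t) := by
  induction h with
  | nil => simp at hlen
  | cons _ ih => exact List.Lex.cons (ih (by simpa using hlen))
  | rel hr => exact List.Lex.rel hr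

theorem CanonicalPath.minimal (hc : CanonicalPath w ids i u v p) {q : List V}
    (hq : q.length ≤ i) (hqv : last u q = v) (hqp : cost w u q ≤ cost w u p) :
    cost w u q = cost w u p ∧ p.length ≤ q.length ∧
      (p.length = q.length → ¬ List.Lex (· < ·) ((u :: q).map ids) ((u :: p).map ids)) := by
  have hcost : cost w u q = cost w u p :=
    le_antisymm hqp (hc.2.2.1 ▸ hdist_le_cost hq hqv)
  exact ⟨hcost, hc.2.2.2 q hq hqv (hcost.trans hc.2.2.1)⟩

theorem CanonicalPath.of_minimal [Finite V] (hp : p.length ≤ i) (hpv : last u p = v)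
    (hmin : ∀ q : List V, q.length ≤ i → last u q = v → cost w u q ≤ cost w u p →
      cost w u q = cost w u p ∧ p.length ≤ q.length ∧
        (p.length = q.length → ¬ List.Lex (· < ·) ((u :: q).map ids) ((u :: p).map ids))) :
    CanonicalPath w ids i u v p := by
  have hcost : cost w u p = hdist w i u v := by
    refine le_antisymm ?_ (hdist_le_cost hp hpv)
    rcases eq_top_or_lt_top (hdist w i u v) with htop | hfin
    · exact htop ▸ le_top
    obtain ⟨q, hq, hqv, hqc⟩ := exists_cost_eq_hdist hfin
    rw [← hqc, (hmin q hq hqv (hqc ▸ hdist_le_cost hp hpv)).1]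
  exact ⟨hp, hpv, hcost, fun q hq hqv hqc => (hmin q hq hqv (hqc.trans hcost.symm).le).2⟩

theorem CanonicalPath.unique (hids : Function.Injective ids) {q : List V}
    (hp : CanonicalPath w ids i u v p) (hq : CanonicalPath w ids i u v q) : p = q := by
  have hpq := hp.2.2.2 q hq.1 hq.2.1 hq.2.2.1
  have hqp := hq.2.2.2 p hp.1 hp.2.1 hp.2.2.1
  have hlen : p.length = q.length := le_antisymm hpq.1 hqp.1
  have hmap : (u :: p).map ids = (u :: q).map ids :=
    Std.Trichotomous.trichotomous _ _ (hqp.2 hlen.symm) (hpq.2 hlen)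
  exact List.cons_injective (List.map_injective_iff.mpr hids hmap)

/-- A repeated vertex would leave a cycle whose removal gives a shorter walk of no larger
weight. -/
theorem CanonicalPath.nodup (hc : CanonicalPath w ids i u v p) : (u :: p).Nodup := by
  refine nodup_cons_of_forall_last_notMem fun A B hAB hmem => ?_
  generalize ht : last u A = t at hmem
  obtain ⟨B₁, B₂, rfl⟩ := List.mem_iff_append.mp hmem
  have hcycle : last t (B₁ ++ [t]) = t := by rw [last_append]; rfl
  have hsplit : p = A ++ ((B₁ ++ [t]) ++ B₂) := by simp [hAB]
  have hlast : last u (A ++ B₂) = v := by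
    simp only [← hc.2.1, hsplit, last_append, ht, hcycle]
  have hlen : (A ++ B₂).length < p.length := by simp [hsplit]; omega
  have hcost : cost w u (A ++ B₂) ≤ cost w u p := by
    simp only [hsplit, cost_append, ht, hcycle]
    gcongr
    exact le_add_self
  have := (hc.minimal (hlen.le.trans hc.1) hlast hcost).2.1
  omega

theorem CanonicalPath.of_append_left [Finite V] {A B : List V}
    (hc : CanonicalPath w ids i u v (A ++ B)) (hfin : cost w u (A ++ B) < ⊤) :
    CanonicalPath w ids A.length u (last u A) A := by
  rw [cost_append] at hfin
  refine .of_minimal le_rfl rfl fun q hq hqA hqc => ?_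
  have hlen : (q ++ B).length ≤ i := by
    simpa using (Nat.add_le_add_right hq _).trans (by simpa using hc.1)
  obtain ⟨hcost, hle, hlex⟩ :=
    hc.minimal hlen (by rw [last_append, hqA, ← last_append, hc.2.1])
    (by rw [cost_append, cost_append, hqA]; gcongr)
  rw [cost_append, cost_append, hqA] at hcost
  refine ⟨(ENNReal.add_left_inj (lt_of_le_of_lt le_add_self hfin).ne).mp hcost,
    by simpa using hle, fun hAq hqlex => hlex (by simp [hAq]) ?_⟩
  simpa using lex_append_of_length_eq hqlex (by simp [hAq]) (B.map ids)

theorem CanonicalPath.of_append_right [Finite V] {A B : List V}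
    (hc : CanonicalPath w ids i u v (A ++ B)) (hfin : cost w u (A ++ B) < ⊤) :
    CanonicalPath w ids B.length (last u A) v B := by
  rw [cost_append] at hfin
  have hBv : last (last u A) B = v := by rw [← last_append, hc.2.1]
  refine .of_minimal le_rfl hBv fun q hq hqv hqc => ?_
  have hlen : (A ++ q).length ≤ i := by
    simpa using (Nat.add_le_add_left hq _).trans (by simpa using hc.1)
  obtain ⟨hcost, hle, hlex⟩ := hc.minimal hlen (by rw [last_append, hqv])
    (by rw [cost_append, cost_append]; gcongr)
  rw [cost_append, cost_append] at hcost
  refine ⟨(ENNReal.add_right_inj (lt_of_le_of_lt le_self_add hfin).ne).mp hcost,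
    by simpa using hle, fun hBq hqlex => hlex (by simp [hBq]) ?_⟩
  simp only [List.map_cons] at hqlex
  have := List.Lex.append_left _ (List.lex_cons_iff.mp hqlex) ((u :: A).map ids)
  simpa only [List.map_cons, List.map_append, List.cons_append] using this

end Canonical

section TieBreak

variable {w : V → V → ℝ≥0∞} {ids : V → ℕ} {i : ℕ} {u v : V}

theorem minHops_le {p : List V} (hlen : p.length ≤ i) (hlast : last u p = v)
    (hcost : cost w u p = hdist w i u v) : minHops w i u v ≤ p.length :=
  Nat.sInf_le ⟨p, rfl, hlen, hlast, hcost⟩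

theorem CanonicalPath.minHops_eq {p : List V} (hc : CanonicalPath w ids i u v p) :
    minHops w i u v = p.length := by
  refine le_antisymm (minHops_le hc.1 hc.2.1 hc.2.2.1) ?_
  have hne : {ℓ : ℕ | ∃ q : List V, q.length = ℓ ∧ ℓ ≤ i ∧ last u q = v ∧
      cost w u q = hdist w i u v}.Nonempty := ⟨p.length, p, rfl, hc.1, hc.2.1, hc.2.2.1⟩
  obtain ⟨q, hq, hqi, hqv, hqc⟩ := Nat.sInf_mem hne
  rw [minHops, ← hq]
  exact (hc.2.2.2 q (hq ▸ hqi) hqv hqc).1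

theorem CanonicalPath.hdist_prefix_le_cost_le {A B : List V}
    (hc : CanonicalPath w ids i u v (A ++ B)) :
    hdist w i u (last u A) ≤ cost w u A ∧ cost w u A ≤ hdist w i u v := by
  refine ⟨hdist_le_cost (le_trans (by simp) hc.1) rfl, ?_⟩
  rw [← hc.2.2.1, cost_append]
  exact le_self_add

theorem CanonicalPath.not_keyLt_last (g : V → ℕ) {A B : List V}
    (hc : CanonicalPath w ids i u v (A ++ B)) (hB : B ≠ []) :
    ¬ keyLt (hdist w i u) (fun x => (minHops w i u x, g x)) v (last u A) := by
  obtain ⟨hdA, hAv⟩ := hc.hdist_prefix_le_cost_le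
  rw [keyLt, Prod.lex_def, Prod.lex_def]
  rintro (hlt | ⟨heq, hhops | ⟨hhops, -⟩⟩)
  · exact (hdA.trans hAv).not_gt hlt
  all_goals
    dsimp only at heq hhops
    have hmin := minHops_le (le_trans (by simp) hc.1) rfl (le_antisymm (hAv.trans heq.le) hdA)
    have hlen : A.length < (A ++ B).length := by simpa using List.length_pos_iff.mpr hB
    rw [hc.minHops_eq] at hhops
    omega

end TieBreak

section Skeleton

variable [DecidableEq V] [Finite V] (w : V → V → ℝ≥0∞) (V' : Finset V) (s : ℕ)

theorem hdist_le_cost_skelW (u : V) (p : List V) :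
    hdist w (s * p.length) u (last u p) ≤ cost (skelW w V' s) u p := by
  induction p generalizing u with
  | nil => exact hdist_le_cost (by simp) rfl
  | cons x xs ih =>
    simp only [cost, skelW, last, List.length_cons]
    split_ifs
    · calc hdist w (s * (xs.length + 1)) u (last x xs)
          = hdist w (s + s * xs.length) u (last x xs) := by ring_nf
        _ ≤ hdist w s u x + hdist w (s * xs.length) x (last x xs) := hdist_add_le _ _ _ _ _
        _ ≤ hdist w s u x + cost (skelW w V' s) x xs := by gcongr; exact ih x
    · simp

theorem hdist_mul_le_hdist_skelW (k : ℕ) (u v : V) :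
    hdist w (s * k) u v ≤ hdist (skelW w V' s) k u v :=
  le_iInf₂ fun p hp => calc
    hdist w (s * k) u v ≤ hdist w (s * p.length) u (last u p) :=
      by rw [hp.2]; exact hdist_anti (Nat.mul_le_mul_left s hp.1) u v
    _ ≤ cost (skelW w V' s) u p := hdist_le_cost_skelW w V' s u p

end Skeleton

/-- Event 𝒜, stated for canonical paths themselves rather than for a choice of them. -/
def HitsLongCanonicalPaths (w : V → V → ℝ≥0∞) (ids : V → ℕ) (V' : Finset V) (s : ℕ) :
    Prop :=
  ∀ i u v (p : List V), CanonicalPath w ids i u v p → cost w u p < ⊤ → s ≤ p.length →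
    ∃ x ∈ p.dropLast, x ∈ V'

theorem hitsLongCanonicalPaths_of_choice {w : V → V → ℝ≥0∞} {ids : V → ℕ}
    (hids : Function.Injective ids) {P : ℕ → V → V → List V}
    (hP : ∀ i u v, hdist w i u v < ⊤ → CanonicalPath w ids i u v (P i u v))
    {V' : Finset V} {s : ℕ}
    (hA : ∀ i u v, hdist w i u v < ⊤ → s ≤ (P i u v).length →
      ∃ x ∈ (P i u v).dropLast, x ∈ V') :
    HitsLongCanonicalPaths w ids V' s := by
  intro i u v p hc hfin hlen
  have hd : hdist w i u v < ⊤ := hc.2.2.1 ▸ hfin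
  rw [← (hP i u v hd).unique hids hc] at hlen ⊢
  exact hA i u v hd hlen

/-- Cut the path at its sampled intermediate vertices: by event 𝒜 each piece has fewer than `s`
edges, so it is dominated by a single skeleton edge. -/
theorem exists_skelW_walk [DecidableEq V] [Finite V] {w : V → V → ℝ≥0∞} {ids : V → ℕ}
    {V' : Finset V} {s : ℕ} (hit : HitsLongCanonicalPaths w ids V' s) {i : ℕ} {u z : V}
    {p : List V} (hu : u ∈ V') (hz : z ∈ V') (hc : CanonicalPath w ids i u z p)
    (hfin : cost w u p < ⊤) :
    ∃ q, last u q = z ∧ cost (skelW w V' s) u q ≤ cost w u p ∧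
      q.length ≤ (p.filter (· ∈ V')).length := by
  induction hN : p.length using Nat.strong_induction_on generalizing i u z p with
  | _ N ih =>
  by_cases hsplit : ∃ x ∈ p.dropLast, x ∈ V'
  · obtain ⟨x, hx, hxV⟩ := hsplit
    obtain ⟨A, B, rfl, hA, hB, hAx⟩ := exists_append_of_mem_dropLast u hx
    have hcA := hc.of_append_left hfin
    have hcB := hc.of_append_right hfin
    rw [hAx] at hcA hcB
    rw [cost_append, hAx] at hfin ⊢
    have hAlt : A.length < N := by simpa [← hN] using List.length_pos_iff.mpr hB
    have hBlt : B.length < N := by simpa [← hN] using List.length_pos_iff.mpr hA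
    obtain ⟨qA, hqA, hqAc, hqAl⟩ :=
      ih _ hAlt hu hxV hcA (lt_of_le_of_lt le_self_add hfin) rfl
    obtain ⟨qB, hqB, hqBc, hqBl⟩ :=
      ih _ hBlt hxV hz hcB (lt_of_le_of_lt le_add_self hfin) rfl
    refine ⟨qA ++ qB, by rw [last_append, hqA, hqB], ?_, ?_⟩
    · rw [cost_append, hqA]
      exact add_le_add hqAc hqBc
    · simp only [List.filter_append, List.length_append]
      omega
  · have hshort : p.length ≤ s := by
      by_contra! hlong
      exact hsplit (hit i u z p hc hfin hlong.le)
    rcases eq_or_ne p [] with rfl | hp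
    · exact ⟨[], hc.2.1, le_rfl, le_rfl⟩
    refine ⟨[z], rfl, ?_, ?_⟩
    · simpa [cost, skelW, hu, hz] using hdist_le_cost hshort hc.2.1
    · refine List.length_pos_of_mem (List.mem_filter.mpr ⟨?_, by simpa using hz⟩)
      rw [← hc.2.1, last_eq_getLast u hp]
      exact List.getLast_mem hp

section KNear

variable {d d' : V → ℝ≥0∞} {tie : V → ℕ × ℕ} {dom S T : Finset V} {k : ℕ} {v : V}

theorem keyLt_of_le {y z : V} (h : keyLt d tie y z) (hy : d' y ≤ d y) (hz : d z ≤ d' z) :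
    keyLt d' tie y z := by
  rw [keyLt, Prod.lex_def] at h ⊢
  rcases h with hlt | ⟨heq, htie⟩
  · exact Or.inl (hy.trans_lt (hlt.trans_le hz))
  · rcases (hy.trans (heq.le.trans hz)).lt_or_eq with hlt | heq'
    · exact Or.inl hlt
    · exact Or.inr ⟨heq', htie⟩

theorem IsKNear.of_le (hS : IsKNear d tie dom k v S) (hle : ∀ x, d x ≤ d' x)
    (hge : ∀ x ∈ S, d' x ≤ d x) : IsKNear d' tie dom k v S := by
  obtain ⟨hdom, hv, hcard, hfin, hlt, hfull⟩ := hS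
  refine ⟨hdom, hv, hcard, fun y hy => (hge y hy).trans_lt (hfin y hy), ?_, ?_⟩
  · exact fun y hy z hz hzS hzv hzfin =>
      keyLt_of_le (hlt y hy z hz hzS hzv ((hle z).trans_lt hzfin)) (hge y hy) (hle z)
  · exact fun z hz hzv hzfin => hfull z hz hzv ((hle z).trans_lt hzfin)

theorem IsKNear.subset (hS : IsKNear d tie dom k v S) (hT : IsKNear d tie dom k v T) :
    S ⊆ T := by
  intro y hyS
  by_contra hyT
  have hyv : y ≠ v := fun h => hS.2.1 (h ▸ hyS)
  have hcardT : T.card = k := hT.2.2.2.2.2 y (hS.1 hyS) hyv (hS.2.2.2.1 y hyS) hyT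
  obtain ⟨t, htT, htS⟩ : ∃ t ∈ T, t ∉ S := Finset.not_subset.mp fun hTS =>
    hyT (Finset.eq_of_subset_of_card_le hTS (hcardT ▸ hS.2.2.1) ▸ hyS)
  have htv : t ≠ v := fun h => hT.2.1 (h ▸ htT)
  exact asymm (r := Prod.Lex (· < ·) (Prod.Lex (· < ·) (· < ·)))
    (hS.2.2.2.2.1 y hyS t (hT.1 htT) htS htv (hT.2.2.2.1 t htT))
    (hT.2.2.2.2.1 t htT y (hS.1 hyS) hyT hyv (hS.2.2.2.1 y hyS))

theorem IsKNear.unique (hS : IsKNear d tie dom k v S) (hT : IsKNear d tie dom k v T) :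
    S = T :=
  (hS.subset hT).antisymm (hT.subset hS)

end KNear

theorem CanonicalPath.filter_subset_of_isKNear [DecidableEq V] {w : V → V → ℝ≥0∞}
    {ids g : V → ℕ} {i k : ℕ} {v z : V} {p : List V} {dom S : Finset V}
    (hS : IsKNear (hdist w i v) (fun x => (minHops w i v x, g x)) dom k v S) (hz : z ∈ S)
    (hc : CanonicalPath w ids i v z p) : (p.filter (· ∈ dom)).toFinset ⊆ S := by
  intro t ht
  simp only [List.mem_toFinset, List.mem_filter, decide_eq_true_eq] at ht
  rcases mem_dropLast_or_eq_last v ht.1 with htd | rfl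
  swap
  · exact hc.2.1 ▸ hz
  by_contra htS
  obtain ⟨A, B, rfl, -, hB, rfl⟩ := exists_append_of_mem_dropLast v htd
  have htv : last v A ≠ v := fun h => List.nodup_cons.mp hc.nodup |>.1 (h ▸ ht.1)
  obtain ⟨hdA, hAv⟩ := hc.hdist_prefix_le_cost_le
  exact hc.not_keyLt_last g hB
    (hS.2.2.2.2.1 z hz _ ht.2 htS htv ((hdA.trans hAv).trans_lt (hS.2.2.2.1 z hz)))

theorem skeleton_knear_eq_general [Fintype V] [DecidableEq V]
    (w : V → V → ℝ≥0∞)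
    (n : ℕ)
    (ids : V → ℕ) (hids : Function.Injective ids)
    (P : ℕ → V → V → List V)
    (hP : ∀ i u v, hdist w i u v < ⊤ → CanonicalPath w ids i u v (P i u v))
    (V' : Finset V)
    (hA : ∀ i u v, hdist w i u v < ⊤ → Nat.sqrt n ≤ (P i u v).length →
      ∃ x ∈ (P i u v).dropLast, x ∈ V')
    (k : ℕ)
    (v' : V) (hv' : v' ∈ V')
    (S₁ S₂ : Finset V)
    (hS₁ : IsKNear (hdist (skelW w V' (Nat.sqrt n)) k v')
      (fun x => (minHops w (Nat.sqrt n * k) v' x, ids x)) V' k v' S₁)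
    (hS₂ : IsKNear (hdist w (Nat.sqrt n * k) v')
      (fun x => (minHops w (Nat.sqrt n * k) v' x, ids x)) V' k v' S₂) :
    S₁ = S₂ := by
  have hit := hitsLongCanonicalPaths_of_choice hids hP hA
  refine hS₁.unique (hS₂.of_le (hdist_mul_le_hdist_skelW w V' _ k v') fun z hz => ?_)
  set p := P (Nat.sqrt n * k) v' z
  have hc : CanonicalPath w ids (Nat.sqrt n * k) v' z p := hP _ _ _ (hS₂.2.2.2.1 z hz)
  obtain ⟨q, hqz, hqcost, hqlen⟩ :=
    exists_skelW_walk hit hv' (hS₂.1 hz) hc (hc.2.2.1 ▸ hS₂.2.2.2.1 z hz)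
  have hqk : q.length ≤ k := calc
    q.length ≤ (p.filter (· ∈ V')).length := hqlen
    _ = (p.filter (· ∈ V')).toFinset.card :=
      (List.toFinset_card_of_nodup (hc.nodup.of_cons.filter _)).symm
    _ ≤ S₂.card := Finset.card_le_card (hc.filter_subset_of_isKNear hS₂ hz)
    _ ≤ k := hS₂.2.2.1
  calc hdist (skelW w V' (Nat.sqrt n)) k v' z ≤ cost (skelW w V' (Nat.sqrt n)) v' q :=
        hdist_le_cost hqk hqz
    _ ≤ _ := hqcost
    _ = _ := hc.2.2.1

/-- Under event 𝒜, for every sampled vertex `v'`, the set of the `k` closest sampled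
vertices under `k`-hop-limited distance in the skeleton graph `G'` equals the set of
the `k` closest sampled vertices under `(√n·k)`-hop-limited distance in `G` (ties
broken in both cases using the corresponding paths in `G`). -/
theorem skeleton_knear_eq [Fintype V] [DecidableEq V]
    (w : V → V → ℝ≥0∞) (hsymm : ∀ u v, w u v = w v u)
    (n : ℕ) (hn : n = Fintype.card V)
    (ids : V → ℕ) (hids : Function.Injective ids)
    (P : ℕ → V → V → List V)
    (hP : ∀ i u v, hdist w i u v < ⊤ → CanonicalPath w ids i u v (P i u v))
    (V' : Finset V)
    (hA : ∀ i u v, hdist w i u v < ⊤ → Nat.sqrt n ≤ (P i u v).length →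
      ∃ x ∈ (P i u v).dropLast, x ∈ V')
    (k : ℕ) (hk : 1 ≤ k)
    (v' : V) (hv' : v' ∈ V')
    (S₁ S₂ : Finset V)
    (hS₁ : IsKNear (hdist (skelW w V' (Nat.sqrt n)) k v')
      (fun x => (minHops w (Nat.sqrt n * k) v' x, ids x)) V' k v' S₁)
    (hS₂ : IsKNear (hdist w (Nat.sqrt n * k) v')
      (fun x => (minHops w (Nat.sqrt n * k) v' x, ids x)) V' k v' S₂) :
    S₁ = S₂ :=
  skeleton_knear_eq_general w n ids hids P hP V' hA k v' hv' S₁ S₂ hS₁ hS₂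

end Stmt8
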